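/- Explicit diffusion coefficient under the gradient condition (Remark after Theorem 3.17): Assume C_+ > 0, C_- > 0, C_E ≥ 0, C_A > 0, C_C > 0, d ≥ 1, and the gradient condition C_+ + C_- - C_A - 2C_E = 0. Then for every ρ ∈ (-1,1), d(ρ) = -(Φ'(ρ)/2)·(C_+ - C_-) + (1/2)·(C_+ + C_-). -/

import Mathlib

open Finset Filter

/-- Sites of the infinite lattice `ℤ^d`. -/
abbrev Site (d : ℕ) := Fin d → ℤ

/-- Configurations `χ^d = {-1,0,1}^{ℤ^d}`: the `Fin 3` values `0, 1, 2`
code the spins `-1, 0, 1` respectively. -/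
abbrev Config (d : ℕ) := Site d → Fin 3

/-- Spin value of a configuration at a site. -/
def spin {d : ℕ} (η : Config d) (x : Site d) : ℤ := (η x : ℤ) - 1

/-- The unit vector `e_i` of `ℤ^d`. -/
def ee (d : ℕ) (i : Fin d) : Site d := Pi.single i 1

/-- The translated configuration `τ_x η`, `(τ_x η)(z) = η(z - x)`. -/
def shiftCfg {d : ℕ} (x : Site d) (η : Config d) : Config d := fun z => η (z - x)

/-- `η` is `(x,y)`-active: `(η(x), η(y)) ∈ {(1,0), (0,-1), (-1,1), (1,-1), (0,0)}`. -/
def IsActive {d : ℕ} (x y : Site d) (η : Config d) : Prop :=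
  (η x = 2 ∧ η y = 1) ∨ (η x = 1 ∧ η y = 0) ∨ (η x = 0 ∧ η y = 2) ∨
    (η x = 2 ∧ η y = 0) ∨ (η x = 1 ∧ η y = 1)

instance {d : ℕ} (x y : Site d) (η : Config d) : Decidable (IsActive x y η) := by
  unfold IsActive; infer_instance

/-- The configuration `η^{(x,y)}`: swap the values at `x` and `y` in the three exchange cases,
annihilate a `(+,-)` pair, or create a `(-,+)` pair from two empty sites. -/
def cfgFlip {d : ℕ} (x y : Site d) (η : Config d) : Config d := fun z =>
  if z = x then (if η x = 2 ∧ η y = 0 then 1 else if η x = 1 ∧ η y = 1 then 0 else η y)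
  else if z = y then (if η x = 2 ∧ η y = 0 then 1 else if η x = 1 ∧ η y = 1 then 2 else η x)
  else η z

/-- The jump rate `c_{(x,y)}(η)` with constants `C_+, C_-, C_E, C_A, C_C`. -/
def rate {d : ℕ} (Cp Cm CE CA CC : ℝ) (x y : Site d) (η : Config d) : ℝ :=
  if η x = 2 ∧ η y = 1 then Cp
  else if η x = 1 ∧ η y = 0 then Cm
  else if η x = 0 ∧ η y = 2 then CE
  else if η x = 2 ∧ η y = 0 then CA
  else if η x = 1 ∧ η y = 1 then CC
  else 0

/-- `Φ(ρ)`, the probability of an empty site, with `β = C_C / C_A`. -/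
noncomputable def Phi (β ρ : ℝ) : ℝ :=
  if β = 1 / 4 then (1 - ρ ^ 2) / 2
  else (1 - Real.sqrt (4 * β + ρ ^ 2 - 4 * β * ρ ^ 2)) / (1 - 4 * β)

/-- The single-site marginal weight of `ν_ρ`: spin `-1` gets `(1-Φ(ρ)-ρ)/2`,
spin `0` gets `Φ(ρ)`, spin `1` gets `(1-Φ(ρ)+ρ)/2`. -/
noncomputable def wgt (β ρ : ℝ) : Fin 3 → ℝ := fun v =>
  if v = 0 then (1 - Phi β ρ - ρ) / 2 else if v = 1 then Phi β ρ else (1 - Phi β ρ + ρ) / 2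

/-- The box `Λ_n = {-n,...,n}^d` as a finite set of sites. -/
noncomputable def box (d : ℕ) (n : ℕ) : Finset (Site d) :=
  Fintype.piFinset fun _ : Fin d => Finset.Icc (-(n : ℤ)) (n : ℤ)

/-- Extension of a configuration on a finite set of sites by empty sites. -/
def extOn {d : ℕ} (S : Finset (Site d)) (ζ : {x : Site d // x ∈ S} → Fin 3) : Config d :=
  fun v => if h : v ∈ S then ζ ⟨v, h⟩ else 1

/-- Expectation with respect to the marginal of `ν_ρ` on a finite set `S` of sites
(exact for functions depending only on the coordinates in `S`). -/
noncomputable def Eexp {d : ℕ} (β ρ : ℝ) (S : Finset (Site d)) (f : Config d → ℝ) : ℝ :=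
  ∑ ζ : ({x : Site d // x ∈ S} → Fin 3), (∏ x, wgt β ρ (ζ x)) * f (extOn S ζ)

/-- The `ν_ρ`-integral `∫ f dν_ρ`, obtained as the limit of the finite-box marginal
expectations; for a cylinder function the sequence is eventually constant. -/
noncomputable def nuInt {d : ℕ} (β ρ : ℝ) (f : Config d → ℝ) : ℝ :=
  limUnder atTop fun n : ℕ => Eexp β ρ (box d n) f

/-- `f` is a cylinder function: it depends on finitely many coordinates. -/
def IsCylinder {d : ℕ} (f : Config d → ℝ) : Prop :=
  ∃ S : Finset (Site d), ∀ η η' : Config d, (∀ x ∈ S, η x = η' x) → f η = f η'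

/-- `π_{0,e_i} Γ_g (η)`: the (finitely supported) sum
`Σ_{x ∈ ℤ^d} (τ_x g(η^{(0,e_i)}) - τ_x g(η))` for a cylinder function `g`. -/
noncomputable def gradGammaSum {d : ℕ} (i : Fin d) (g : Config d → ℝ) (η : Config d) : ℝ :=
  ∑' x : Site d, (g (shiftCfg x (cfgFlip (0 : Site d) (ee d i) η)) - g (shiftCfg x η))

/-- The Dirichlet form `D_{0,e_i}(ν_ρ; a·η(0) + Γ_g)
= ∫ c_{(0,e_i)}(η) (a·π_{0,e_i}η(0)(η) + π_{0,e_i}Γ_g(η))² dν_ρ`. -/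
noncomputable def dirichletForm {d : ℕ} (Cp Cm CE CA CC ρ : ℝ) (i : Fin d) (a : ℝ)
    (g : Config d → ℝ) : ℝ :=
  nuInt (CC / CA) ρ fun η =>
    rate Cp Cm CE CA CC (0 : Site d) (ee d i) η *
      (a * ((spin (cfgFlip (0 : Site d) (ee d i) η) (0 : Site d) : ℝ) - (spin η (0 : Site d) : ℝ))
        + gradGammaSum i g η) ^ 2

/-- The static compressibility `χ(ρ) = 1 - Φ(ρ) - ρ²`. -/
noncomputable def compress (β ρ : ℝ) : ℝ := 1 - Phi β ρ - ρ ^ 2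

/-- The diffusion coefficient
`d(ρ) = χ(ρ)⁻¹ · inf_g D_{0,e_1}(ν_ρ; η(0) + Γ_g)`,
the infimum over all cylinder functions `g`. -/
noncomputable def dCoef (d : ℕ) (hd : 0 < d) (Cp Cm CE CA CC : ℝ) (ρ : ℝ) : ℝ :=
  (compress (CC / CA) ρ)⁻¹ *
    sInf {v : ℝ | ∃ g : Config d → ℝ, IsCylinder g ∧
      v = dirichletForm Cp Cm CE CA CC ρ (⟨0, hd⟩ : Fin d) 1 g}

/-!
With `w` the one-site marginal of `ν_ρ`, the equation defining `Φ` is detailed balance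
`C_A w(1) w(-1) = C_C w(0)²`, so `ν_ρ` is reversible for every bond move and
`∫ c_{0,e} π η(0) · π h dν_ρ = ∫ (φ(η(0)) - φ(η(e))) h dν_ρ`, where, by the gradient condition,
`φ = (-C_-, 0, C_+)` satisfies `c_{0,e} π_{0,e} η(0) + c_{e,0} π_{e,0} η(0) = φ(η(e)) - φ(η(0))`.
For `h = Γ_g`, translation invariance turns the cross term of
`D(η(0) + Γ_g) = D(η(0)) + 2 ∫ c π η(0) · π Γ_g + ∫ c (π Γ_g)²` into a telescoping sum, which
vanishes. Hence `g = 0` is optimal, and `d(ρ) = D(η(0)) / χ(ρ)` is a two-site computation, with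
`χ(ρ) = Φ(ρ) √(4β + ρ² - 4βρ²)` and `Φ'(ρ) = -ρ / √(4β + ρ² - 4βρ²)`.
-/

lemma sum_sub_translate_eq_zero {G : Type*} [AddCommGroup G] [DecidableEq G] {W : G → ℝ}
    {c : ℝ} {S X : Finset G} (a : G) (hW : ∀ z ∉ S, W z = c) (hSX : S ⊆ X)
    (hSXa : S ⊆ X.image (a + ·)) : ∑ x ∈ X, (W x - W (a + x)) = 0 := by
  have hsum (A : Finset G) (hA : S ⊆ A) :
      ∑ z ∈ A, W z = ∑ z ∈ S, W z + (#A - #S : ℕ) * c := by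
    rw [← sum_sdiff hA, sum_congr rfl fun z hz => hW z (mem_sdiff.1 hz).2, sum_const,
      nsmul_eq_mul, card_sdiff_of_subset hA, add_comm]
  rw [sum_sub_distrib, ← sum_image (add_right_injective a).injOn, hsum X hSX, hsum _ hSXa,
    card_image_of_injective _ (add_right_injective a), sub_self]

noncomputable def phiRoot (β ρ : ℝ) : ℝ := √(4 * β + ρ ^ 2 - 4 * β * ρ ^ 2)

section Phi

variable {β ρ : ℝ}

lemma phiRoot_eq (β ρ : ℝ) : phiRoot β ρ = 1 - (1 - 4 * β) * Phi β ρ := by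
  unfold Phi phiRoot
  split_ifs with hβ
  · subst hβ; norm_num
  · have h4 : 1 - 4 * β ≠ 0 := fun h => hβ (by linarith)
    field_simp
    ring

lemma phiRoot_radicand_pos (hβ : 0 < β) (hρ : |ρ| < 1) :
    0 < 4 * β + ρ ^ 2 - 4 * β * ρ ^ 2 := by
  have := (sq_lt_one_iff_abs_lt_one ρ).2 hρ
  nlinarith [sq_nonneg ρ]

lemma phiRoot_pos (hβ : 0 < β) (hρ : |ρ| < 1) : 0 < phiRoot β ρ :=
  Real.sqrt_pos.2 (phiRoot_radicand_pos hβ hρ)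

lemma one_sub_Phi_sq_sub_sq (hβ : 0 < β) (hρ : |ρ| < 1) :
    (1 - Phi β ρ) ^ 2 - ρ ^ 2 = 4 * β * Phi β ρ ^ 2 := by
  by_cases hβ4 : β = 1 / 4
  · simp only [Phi, if_pos hβ4]; subst hβ4; ring
  have hr : phiRoot β ρ ^ 2 = 4 * β + ρ ^ 2 - 4 * β * ρ ^ 2 :=
    Real.sq_sqrt (phiRoot_radicand_pos hβ hρ).le
  rw [phiRoot_eq] at hr
  have h4 : 1 - 4 * β ≠ 0 := fun h => hβ4 (by linarith)
  apply mul_left_cancel₀ h4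
  linear_combination hr

lemma Phi_mul_one_add_phiRoot (hβ : 0 < β) (hρ : |ρ| < 1) :
    Phi β ρ * (1 + phiRoot β ρ) = 1 - ρ ^ 2 := by
  rw [phiRoot_eq]
  linear_combination (-1 : ℝ) * one_sub_Phi_sq_sub_sq hβ hρ

lemma Phi_pos (hβ : 0 < β) (hρ : |ρ| < 1) : 0 < Phi β ρ := by
  have h := Phi_mul_one_add_phiRoot hβ hρ
  have := (sq_lt_one_iff_abs_lt_one ρ).2 hρ
  exact pos_of_mul_pos_left (by rw [h]; linarith) (by linarith [phiRoot_pos hβ hρ])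

lemma abs_lt_one_sub_Phi (hβ : 0 < β) (hρ : |ρ| < 1) : |ρ| < 1 - Phi β ρ := by
  have h := Phi_mul_one_add_phiRoot hβ hρ
  have hr := phiRoot_pos hβ hρ
  have hΦ := Phi_pos hβ hρ
  refine abs_lt_of_sq_lt_sq ?_ (by nlinarith [mul_pos hΦ hr, sq_nonneg ρ])
  nlinarith [one_sub_Phi_sq_sub_sq hβ hρ, mul_pos hβ (pow_pos hΦ 2)]

lemma compress_eq (hβ : 0 < β) (hρ : |ρ| < 1) : compress β ρ = Phi β ρ * phiRoot β ρ := by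
  rw [compress, phiRoot_eq]
  linear_combination one_sub_Phi_sq_sub_sq hβ hρ

lemma hasDerivAt_Phi (hβ : 0 < β) (hρ : |ρ| < 1) :
    HasDerivAt (Phi β) (-ρ / phiRoot β ρ) ρ := by
  by_cases hβ4 : β = 1 / 4
  · have hr : phiRoot β ρ = 1 := by simp [phiRoot, hβ4]
    have hΦ : Phi β = fun r => (1 - r ^ 2) / 2 := funext fun r => if_pos hβ4
    rw [hΦ, hr]
    exact (((hasDerivAt_pow 2 ρ).const_sub 1).div_const 2).congr_deriv (by ring)
  · have hΦ : Phi β = fun r => (1 - √(4 * β + r ^ 2 - 4 * β * r ^ 2)) / (1 - 4 * β) :=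
      funext fun r => if_neg hβ4
    have h4 : 1 - 4 * β ≠ 0 := fun h => hβ4 (by linarith)
    have hrad : HasDerivAt (fun r => 4 * β + r ^ 2 - 4 * β * r ^ 2) (2 * ρ * (1 - 4 * β)) ρ :=
      (((hasDerivAt_pow 2 ρ).const_add (4 * β)).sub
        ((hasDerivAt_pow 2 ρ).const_mul (4 * β))).congr_deriv (by ring)
    rw [hΦ]
    refine (((hrad.sqrt (phiRoot_radicand_pos hβ hρ).ne').const_sub 1).div_const
      (1 - 4 * β)).congr_deriv ?_
    rw [← phiRoot]
    field_simp [(phiRoot_pos hβ hρ).ne']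

lemma wgt_zero (β ρ : ℝ) : wgt β ρ 0 = (1 - Phi β ρ - ρ) / 2 := rfl

lemma wgt_one (β ρ : ℝ) : wgt β ρ 1 = Phi β ρ := rfl

lemma wgt_two (β ρ : ℝ) : wgt β ρ 2 = (1 - Phi β ρ + ρ) / 2 := rfl

lemma sum_wgt (β ρ : ℝ) : ∑ v, wgt β ρ v = 1 := by
  rw [Fin.sum_univ_three, wgt_zero, wgt_one, wgt_two]
  ring

lemma wgt_pos (hβ : 0 < β) (hρ : |ρ| < 1) (v : Fin 3) : 0 < wgt β ρ v := by
  have hΦ := Phi_pos hβ hρ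
  have h := abs_lt.1 (abs_lt_one_sub_Phi hβ hρ)
  fin_cases v
  · rw [Fin.zero_eta, wgt_zero]; linarith
  · rw [Fin.mk_one, wgt_one]; exact hΦ
  · rw [show (⟨2, _⟩ : Fin 3) = 2 from rfl, wgt_two]; linarith

lemma wgt_two_mul_wgt_zero (hβ : 0 < β) (hρ : |ρ| < 1) :
    wgt β ρ 2 * wgt β ρ 0 = β * (wgt β ρ 1 * wgt β ρ 1) := by
  rw [wgt_zero, wgt_one, wgt_two]
  linear_combination one_sub_Phi_sq_sub_sq hβ hρ / 4

end Phi

section FiniteExpectation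

variable {d : ℕ} {β ρ : ℝ}

lemma extOn_of_mem {S : Finset (Site d)} (ζ : {x // x ∈ S} → Fin 3) {x : Site d}
    (hx : x ∈ S) :
    extOn S ζ x = ζ ⟨x, hx⟩ := dif_pos hx

lemma extOn_of_notMem {S : Finset (Site d)} (ζ : {x // x ∈ S} → Fin 3) {x : Site d}
    (hx : x ∉ S) : extOn S ζ x = 1 := dif_neg hx

lemma extOn_restrict {S : Finset (Site d)} {η : Config d} (hη : ∀ x ∉ S, η x = 1) :
    extOn S (fun x => η x) = η := by
  funext x
  by_cases hx : x ∈ S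
  · exact extOn_of_mem _ hx
  · rw [extOn_of_notMem _ hx, hη x hx]

lemma prod_wgt_eq_prod_extOn (S : Finset (Site d)) (ζ : {x // x ∈ S} → Fin 3) :
    ∏ x, wgt β ρ (ζ x) = ∏ x ∈ S, wgt β ρ (extOn S ζ x) := by
  rw [← prod_coe_sort S]
  exact prod_congr rfl fun x _ => by rw [extOn_of_mem ζ x.2]

lemma Eexp_add (B : Finset (Site d)) (f g : Config d → ℝ) :
    Eexp β ρ B (fun η => f η + g η) = Eexp β ρ B f + Eexp β ρ B g := by
  simp only [Eexp, mul_add, sum_add_distrib]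

lemma Eexp_sub (B : Finset (Site d)) (f g : Config d → ℝ) :
    Eexp β ρ B (fun η => f η - g η) = Eexp β ρ B f - Eexp β ρ B g := by
  simp only [Eexp, mul_sub, sum_sub_distrib]

lemma Eexp_const_mul (B : Finset (Site d)) (c : ℝ) (f : Config d → ℝ) :
    Eexp β ρ B (fun η => c * f η) = c * Eexp β ρ B f := by
  simp only [Eexp, mul_sum, mul_left_comm]

lemma Eexp_sum (B : Finset (Site d)) {ι : Type*} (X : Finset ι) (F : ι → Config d → ℝ) :
    Eexp β ρ B (fun η => ∑ x ∈ X, F x η) = ∑ x ∈ X, Eexp β ρ B (F x) := by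
  simp only [Eexp, mul_sum]
  exact sum_comm

lemma Eexp_nonneg (hw : ∀ v, 0 ≤ wgt β ρ v) (B : Finset (Site d)) {f : Config d → ℝ}
    (hf : ∀ η, 0 ≤ f η) : 0 ≤ Eexp β ρ B f :=
  sum_nonneg fun _ _ => mul_nonneg (prod_nonneg fun _ _ => hw _) (hf _)

lemma Eexp_empty (c : ℝ) : Eexp (d := d) β ρ ∅ (fun _ => c) = c := by
  simp [Eexp]

lemma Eexp_insert {a : Site d} {B : Finset (Site d)} (ha : a ∉ B) (G : Fin 3 → Config d → ℝ)
    (hG : ∀ v, DependsOn (G v) ↑B) :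
    Eexp β ρ (insert a B) (fun η => G (η a) η) = ∑ v, wgt β ρ v * Eexp β ρ B (G v) := by
  let e := (Equiv.arrowCongr (subtypeInsertEquivOption ha) (Equiv.refl (Fin 3))).trans
    Equiv.piOptionEquivProd
  simp only [Eexp, mul_sum, ← Fintype.sum_prod_type']
  refine Fintype.sum_equiv e _ _ fun ζ => ?_
  rw [← (subtypeInsertEquivOption ha).symm.prod_comp, Fintype.prod_option]
  have hζa : extOn (insert a B) ζ a = (e ζ).1 := extOn_of_mem ζ (mem_insert_self a B)
  have hζB : G (e ζ).1 (extOn (insert a B) ζ) = G (e ζ).1 (extOn B (e ζ).2) :=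
    hG _ fun x hx => by rw [extOn_of_mem _ (mem_insert_of_mem hx), extOn_of_mem _ hx]; rfl
  rw [hζa, hζB]
  exact mul_assoc _ _ _

lemma Eexp_insert_of_dependsOn {a : Site d} {B : Finset (Site d)} (ha : a ∉ B)
    {f : Config d → ℝ} (hf : DependsOn f ↑B) :
    Eexp β ρ (insert a B) f = Eexp β ρ B f := by
  simpa [← sum_mul, sum_wgt] using Eexp_insert (β := β) (ρ := ρ) ha (fun _ => f) fun _ => hf

lemma Eexp_singleton (x : Site d) (F : Fin 3 → ℝ) :
    Eexp β ρ {x} (fun η => F (η x)) = ∑ v, wgt β ρ v * F v := by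
  simpa [Eexp_empty] using Eexp_insert (β := β) (ρ := ρ) (notMem_empty x) (fun v _ => F v)
    fun v => (dependsOn_const (F v)).mono (Set.empty_subset _)

lemma Eexp_eq_of_dependsOn {f : Config d → ℝ} {S B : Finset (Site d)} (hf : DependsOn f ↑S)
    (hSB : S ⊆ B) : Eexp β ρ B f = Eexp β ρ S f := by
  suffices h : ∀ C, Eexp β ρ (S ∪ C) f = Eexp β ρ S f by
    simpa [union_eq_right.2 hSB] using h B
  intro C
  induction C using Finset.induction_on with
  | empty => rw [union_empty]
  | insert a C _ ih =>
    rw [union_insert]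
    by_cases haC : a ∈ S ∪ C
    · rw [insert_eq_of_mem haC, ih]
    · rw [Eexp_insert_of_dependsOn haC (hf.mono (by simp)), ih]

lemma Eexp_image_add (B : Finset (Site d)) (x : Site d) (u : Config d → ℝ) :
    Eexp β ρ (B.image (· + x)) u = Eexp β ρ B (fun η => u (shiftCfg x η)) := by
  let σ : {z // z ∈ B} ≃ {z // z ∈ B.image (· + x)} :=
    (Equiv.addRight x).subtypeEquiv fun z => by simp
  refine (Fintype.sum_equiv (σ.arrowCongr (Equiv.refl (Fin 3))) _ _ fun ζ => ?_).symm
  have hext : extOn (B.image (· + x)) (σ.arrowCongr (Equiv.refl (Fin 3)) ζ)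
      = shiftCfg x (extOn B ζ) := by
    funext z
    have hmem : z ∈ B.image (· + x) ↔ z - x ∈ B := by simp [sub_eq_add_neg]
    by_cases hz : z - x ∈ B
    · rw [extOn_of_mem _ (hmem.2 hz), shiftCfg, extOn_of_mem _ hz]
      rfl
    · rw [extOn_of_notMem _ (mt hmem.1 hz), shiftCfg, extOn_of_notMem _ hz]
  rw [hext, ← σ.symm.prod_comp (fun z => wgt β ρ (ζ z))]
  rfl

end FiniteExpectation

section Integral

variable {d : ℕ} {β ρ : ℝ}

lemma mem_box {n : ℕ} {x : Site d} : x ∈ box d n ↔ ∀ i, |x i| ≤ n := by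
  simp [_root_.box, abs_le]

lemma eventually_subset_box (S : Finset (Site d)) : ∀ᶠ n in atTop, S ⊆ box d n := by
  obtain ⟨N, hN⟩ := (S.image fun x => univ.sup fun i => (x i).natAbs).exists_le
  refine eventually_atTop.2 ⟨N, fun n hn x hx => mem_box.2 fun i => ?_⟩
  have hxi : (x i).natAbs ≤ n :=
    ((le_sup (mem_univ i)).trans (hN _ (mem_image_of_mem _ hx))).trans hn
  rw [Int.abs_eq_natAbs]
  exact_mod_cast hxi

lemma nuInt_eq_Eexp {f : Config d → ℝ} {S B : Finset (Site d)} (hf : DependsOn f ↑S)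
    (hSB : S ⊆ B) : nuInt β ρ f = Eexp β ρ B f := by
  rw [Eexp_eq_of_dependsOn hf hSB]
  refine Tendsto.limUnder_eq (tendsto_const_nhds.congr' ?_)
  filter_upwards [eventually_subset_box S] with n hn
  exact (Eexp_eq_of_dependsOn hf hn).symm

lemma isCylinder_iff {f : Config d → ℝ} :
    IsCylinder f ↔ ∃ S : Finset (Site d), DependsOn f ↑S :=
  Iff.rfl

lemma IsCylinder.eventually_nuInt_eq_Eexp {f : Config d → ℝ} (hf : IsCylinder f) :
    ∀ᶠ n in atTop, nuInt β ρ f = Eexp β ρ (box d n) f := by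
  obtain ⟨S, hS⟩ := isCylinder_iff.1 hf
  filter_upwards [eventually_subset_box S] with n hn using nuInt_eq_Eexp hS hn

lemma IsCylinder.map₂ {f g : Config d → ℝ} (hf : IsCylinder f) (hg : IsCylinder g)
    (op : ℝ → ℝ → ℝ) : IsCylinder fun η => op (f η) (g η) := by
  obtain ⟨S, hS⟩ := hf
  obtain ⟨T, hT⟩ := hg
  refine ⟨S ∪ T, fun η η' h => ?_⟩
  simp only [hS η η' fun x hx => h x (mem_union_left T hx),
    hT η η' fun x hx => h x (mem_union_right S hx)]

lemma IsCylinder.add {f g : Config d → ℝ} (hf : IsCylinder f) (hg : IsCylinder g) :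
    IsCylinder fun η => f η + g η :=
  hf.map₂ hg (· + ·)

lemma IsCylinder.sub {f g : Config d → ℝ} (hf : IsCylinder f) (hg : IsCylinder g) :
    IsCylinder fun η => f η - g η :=
  hf.map₂ hg (· - ·)

lemma IsCylinder.mul {f g : Config d → ℝ} (hf : IsCylinder f) (hg : IsCylinder g) :
    IsCylinder fun η => f η * g η :=
  hf.map₂ hg (· * ·)

lemma isCylinder_const (c : ℝ) : IsCylinder fun _ : Config d => c :=
  ⟨∅, fun _ _ _ => rfl⟩

lemma isCylinder_sum {ι : Type*} (X : Finset ι) {F : ι → Config d → ℝ}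
    (hF : ∀ x ∈ X, IsCylinder (F x)) : IsCylinder fun η => ∑ x ∈ X, F x η := by
  classical
  induction X using Finset.induction_on with
  | empty => simpa using isCylinder_const 0
  | insert a X ha ih =>
    simp only [sum_insert ha]
    exact (hF a (mem_insert_self a X)).add (ih fun x hx => hF x (mem_insert_of_mem hx))

lemma isCylinder_comp_eval (x : Site d) (F : Fin 3 → ℝ) :
    IsCylinder fun η : Config d => F (η x) :=
  ⟨{x}, fun η η' h => by simp only [h x (mem_singleton_self x)]⟩

lemma DependsOn.comp_shiftCfg {u : Config d → ℝ} {S : Finset (Site d)} (hu : DependsOn u ↑S)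
    (x : Site d) : DependsOn (fun η => u (shiftCfg x η)) ↑(S.image (· - x)) :=
  fun _ _ h => hu fun z hz => h (z - x) (mem_image_of_mem _ hz)

lemma IsCylinder.comp_shiftCfg {u : Config d → ℝ} (hu : IsCylinder u) (x : Site d) :
    IsCylinder fun η => u (shiftCfg x η) := by
  obtain ⟨S, hS⟩ := isCylinder_iff.1 hu
  exact ⟨_, hS.comp_shiftCfg x⟩

lemma IsCylinder.comp_cfgFlip {u : Config d → ℝ} (hu : IsCylinder u) (x y : Site d) :
    IsCylinder fun η => u (cfgFlip x y η) := by
  obtain ⟨S, hS⟩ := hu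
  refine ⟨insert x (insert y S), fun η η' h => hS _ _ fun z hz => ?_⟩
  simp only [cfgFlip, h x (by simp), h y (by simp), h z (by simp [hz])]

lemma nuInt_add {f g : Config d → ℝ} (hf : IsCylinder f) (hg : IsCylinder g) :
    nuInt β ρ (fun η => f η + g η) = nuInt β ρ f + nuInt β ρ g := by
  obtain ⟨n, h, hf, hg⟩ := ((hf.add hg).eventually_nuInt_eq_Eexp.and
    (hf.eventually_nuInt_eq_Eexp.and hg.eventually_nuInt_eq_Eexp)).exists
  rw [h, hf, hg, Eexp_add]

lemma nuInt_sub {f g : Config d → ℝ} (hf : IsCylinder f) (hg : IsCylinder g) :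
    nuInt β ρ (fun η => f η - g η) = nuInt β ρ f - nuInt β ρ g := by
  obtain ⟨n, h, hf, hg⟩ := ((hf.sub hg).eventually_nuInt_eq_Eexp.and
    (hf.eventually_nuInt_eq_Eexp.and hg.eventually_nuInt_eq_Eexp)).exists
  rw [h, hf, hg, Eexp_sub]

lemma nuInt_const_mul (c : ℝ) {f : Config d → ℝ} (hf : IsCylinder f) :
    nuInt β ρ (fun η => c * f η) = c * nuInt β ρ f := by
  obtain ⟨n, h, hf⟩ := (((isCylinder_const c).mul hf).eventually_nuInt_eq_Eexp.and
    hf.eventually_nuInt_eq_Eexp).exists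
  rw [h, hf, Eexp_const_mul]

lemma nuInt_sum {ι : Type*} (X : Finset ι) {F : ι → Config d → ℝ}
    (hF : ∀ x ∈ X, IsCylinder (F x)) :
    nuInt β ρ (fun η => ∑ x ∈ X, F x η) = ∑ x ∈ X, nuInt β ρ (F x) := by
  obtain ⟨n, h, hF⟩ := ((isCylinder_sum X hF).eventually_nuInt_eq_Eexp.and
    ((eventually_all_finset X).2 fun x hx => (hF x hx).eventually_nuInt_eq_Eexp)).exists
  rw [h, Eexp_sum, sum_congr rfl hF]

lemma nuInt_nonneg (hw : ∀ v, 0 ≤ wgt β ρ v) {f : Config d → ℝ} (hf : IsCylinder f)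
    (hf₀ : ∀ η, 0 ≤ f η) : 0 ≤ nuInt β ρ f := by
  obtain ⟨n, h⟩ := (hf.eventually_nuInt_eq_Eexp (β := β) (ρ := ρ)).exists
  exact h ▸ Eexp_nonneg hw _ hf₀

lemma nuInt_comp_shiftCfg {u : Config d → ℝ} (hu : IsCylinder u) (x : Site d) :
    nuInt β ρ (fun η => u (shiftCfg x η)) = nuInt β ρ u := by
  obtain ⟨S, hS⟩ := isCylinder_iff.1 hu
  have hS' : S ⊆ (S.image (· - x)).image (· + x) := fun z hz =>
    mem_image.2 ⟨z - x, mem_image_of_mem _ hz, sub_add_cancel z x⟩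
  rw [nuInt_eq_Eexp hS hS', Eexp_image_add, nuInt_eq_Eexp (hS.comp_shiftCfg x) subset_rfl]

lemma nuInt_mul_of_notMem {g : Config d → ℝ} {S : Finset (Site d)} (hg : DependsOn g ↑S)
    {z : Site d} (hz : z ∉ S) (F : Fin 3 → ℝ) :
    nuInt β ρ (fun η => F (η z) * g η) = (∑ v, wgt β ρ v * F v) * nuInt β ρ g := by
  have hFg : DependsOn (fun η : Config d => F (η z) * g η) ↑(insert z S) := fun η η' h => by
    simp only [h z (mem_insert_self z S), hg fun x hx => h x (mem_insert_of_mem hx)]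
  rw [nuInt_eq_Eexp hFg subset_rfl, Eexp_insert hz (fun v η => F v * g η)
    fun v _ _ h => congrArg (F v * ·) (hg h), nuInt_eq_Eexp hg subset_rfl, sum_mul]
  simp only [Eexp_const_mul, mul_assoc]

lemma nuInt_comp_eval₂ {x y : Site d} (hxy : x ≠ y) (F : Fin 3 → Fin 3 → ℝ) :
    nuInt β ρ (fun η => F (η x) (η y)) = ∑ u, ∑ v, wgt β ρ u * wgt β ρ v * F u v := by
  have hF : DependsOn (fun η : Config d => F (η x) (η y)) ↑({x, y} : Finset (Site d)) :=
    fun η η' h => by simp only [h x (by simp), h y (by simp)]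
  rw [nuInt_eq_Eexp hF subset_rfl, Eexp_insert (by simpa using hxy) (fun u η => F u (η y))
    fun u η η' h => by simp only [h y (by simp)]]
  simp only [Eexp_singleton, mul_sum, mul_assoc]

end Integral

section Moves

variable {d : ℕ} {β ρ Cp Cm CE CA CC : ℝ} {x y z : Site d}

lemma cfgFlip_apply_left (x y : Site d) (η : Config d) :
    cfgFlip x y η x =
      if η x = 2 ∧ η y = 0 then 1 else if η x = 1 ∧ η y = 1 then 0 else η y :=
  if_pos rfl

lemma cfgFlip_apply_right (hxy : x ≠ y) (η : Config d) :
    cfgFlip x y η y =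
      if η x = 2 ∧ η y = 0 then 1 else if η x = 1 ∧ η y = 1 then 2 else η x := by
  simp [cfgFlip, hxy.symm]

lemma cfgFlip_apply_of_ne (hzx : z ≠ x) (hzy : z ≠ y) (η : Config d) :
    cfgFlip x y η z = η z := by
  simp [cfgFlip, hzx, hzy]

lemma cfgFlip_cfgFlip (hxy : x ≠ y) (η : Config d) : cfgFlip y x (cfgFlip x y η) = η := by
  funext z
  by_cases hzx : z = x
  · subst hzx
    rw [cfgFlip_apply_right hxy.symm, cfgFlip_apply_left, cfgFlip_apply_right hxy]
    generalize η z = a, η y = b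
    revert a b; decide
  by_cases hzy : z = y
  · subst hzy
    rw [cfgFlip_apply_left, cfgFlip_apply_left, cfgFlip_apply_right hxy]
    generalize η z = a, η x = b
    revert a b; decide
  rw [cfgFlip_apply_of_ne hzy hzx, cfgFlip_apply_of_ne hzx hzy]

lemma isCylinder_rate (x y : Site d) : IsCylinder (rate Cp Cm CE CA CC x y) :=
  ⟨{x, y}, fun η η' h => by simp only [rate, h x (by simp), h y (by simp)]⟩

lemma rate_nonneg (hCp : 0 ≤ Cp) (hCm : 0 ≤ Cm) (hCE : 0 ≤ CE) (hCA : 0 ≤ CA)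
    (hCC : 0 ≤ CC) (x y : Site d) (η : Config d) : 0 ≤ rate Cp Cm CE CA CC x y η := by
  unfold rate
  split_ifs <;> first | assumption | exact le_rfl

lemma rate_mul_wgt_mul_wgt_cfgFlip (hxy : x ≠ y)
    (hdb : CA * (wgt β ρ 2 * wgt β ρ 0) = CC * (wgt β ρ 1 * wgt β ρ 1)) (η : Config d) :
    rate Cp Cm CE CA CC x y η * (wgt β ρ (η x) * wgt β ρ (η y)) =
      rate Cp Cm CE CA CC y x (cfgFlip x y η) *
        (wgt β ρ (cfgFlip x y η x) * wgt β ρ (cfgFlip x y η y)) := by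
  simp only [rate, cfgFlip_apply_left, cfgFlip_apply_right hxy]
  generalize η x = a, η y = b
  fin_cases a <;> fin_cases b <;> simp [mul_comm] <;>
    first | linear_combination hdb | linear_combination -hdb

lemma extOn_cfgFlip {B : Finset (Site d)} (hx : x ∈ B) (hy : y ∈ B)
    (ζ : {z // z ∈ B} → Fin 3) :
    extOn B (fun z => cfgFlip x y (extOn B ζ) z) = cfgFlip x y (extOn B ζ) :=
  extOn_restrict fun z hz => by
    rw [cfgFlip_apply_of_ne (ne_of_mem_of_not_mem hx hz).symm (ne_of_mem_of_not_mem hy hz).symm,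
      extOn_of_notMem _ hz]

def cfgFlipEquiv {B : Finset (Site d)} (hxy : x ≠ y) (hx : x ∈ B) (hy : y ∈ B) :
    Equiv.Perm ({z // z ∈ B} → Fin 3) where
  toFun ζ z := cfgFlip x y (extOn B ζ) z
  invFun ζ z := cfgFlip y x (extOn B ζ) z
  left_inv ζ := funext fun z => by
    simp only [extOn_cfgFlip hx hy, cfgFlip_cfgFlip hxy, extOn_of_mem _ z.2]
  right_inv ζ := funext fun z => by
    simp only [extOn_cfgFlip hy hx, cfgFlip_cfgFlip hxy.symm, extOn_of_mem _ z.2]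

lemma Eexp_rate_mul_comp_cfgFlip (hxy : x ≠ y)
    (hdb : CA * (wgt β ρ 2 * wgt β ρ 0) = CC * (wgt β ρ 1 * wgt β ρ 1))
    {B : Finset (Site d)} (hx : x ∈ B) (hy : y ∈ B) (H : Config d → ℝ) :
    Eexp β ρ B (fun η => rate Cp Cm CE CA CC x y η * H (cfgFlip x y η)) =
      Eexp β ρ B (fun η => rate Cp Cm CE CA CC y x η * H η) := by
  have hsplit (f : Site d → ℝ) :
      ∏ z ∈ B, f z = f x * f y * ∏ z ∈ (B.erase x).erase y, f z := by
    rw [mul_assoc, mul_prod_erase _ f (mem_erase.2 ⟨hxy.symm, hy⟩), mul_prod_erase _ f hx]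
  refine Fintype.sum_equiv (cfgFlipEquiv hxy hx hy) _ _ fun ζ => ?_
  simp only [prod_wgt_eq_prod_extOn, cfgFlipEquiv, Equiv.coe_fn_mk, extOn_cfgFlip hx hy]
  set η := extOn B ζ
  have hrest : ∏ z ∈ (B.erase x).erase y, wgt β ρ (cfgFlip x y η z) =
      ∏ z ∈ (B.erase x).erase y, wgt β ρ (η z) := prod_congr rfl fun z hz => by
    rw [cfgFlip_apply_of_ne (ne_of_mem_erase (mem_of_mem_erase hz)) (ne_of_mem_erase hz)]
  rw [hsplit, hsplit, hrest]
  linear_combination (∏ z ∈ (B.erase x).erase y, wgt β ρ (η z)) * H (cfgFlip x y η) *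
    rate_mul_wgt_mul_wgt_cfgFlip (Cp := Cp) (Cm := Cm) (CE := CE) hxy hdb η

lemma nuInt_rate_mul_comp_cfgFlip (hxy : x ≠ y)
    (hdb : CA * (wgt β ρ 2 * wgt β ρ 0) = CC * (wgt β ρ 1 * wgt β ρ 1))
    {H : Config d → ℝ} (hH : IsCylinder H) :
    nuInt β ρ (fun η => rate Cp Cm CE CA CC x y η * H (cfgFlip x y η)) =
      nuInt β ρ (fun η => rate Cp Cm CE CA CC y x η * H η) := by
  obtain ⟨n, h₁, h₂, hxyn⟩ :=
    (((isCylinder_rate x y).mul (hH.comp_cfgFlip x y)).eventually_nuInt_eq_Eexp.and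
      (((isCylinder_rate y x).mul hH).eventually_nuInt_eq_Eexp.and
        (eventually_subset_box {x, y}))).exists
  rw [h₁, h₂, Eexp_rate_mul_comp_cfgFlip hxy hdb (hxyn (by simp)) (hxyn (by simp))]

end Moves

section Current

variable {d : ℕ} {β ρ Cp Cm CE CA CC : ℝ} {x y : Site d}

/-- `π_{x,y} η(z)` without the activity indicator: it need not vanish for inactive `η`, but it
only occurs multiplied by `rate x y η`, which does. -/
def spinJump (x y z : Site d) (η : Config d) : ℝ := (spin (cfgFlip x y η) z : ℝ) - spin η z

lemma isCylinder_spinJump (x y z : Site d) : IsCylinder (spinJump x y z) :=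
  let spinVal : Fin 3 → ℝ := fun v => (((v : ℤ) - 1 : ℤ) : ℝ)
  ((isCylinder_comp_eval z spinVal).comp_cfgFlip x y).sub (isCylinder_comp_eval z spinVal)

lemma spinJump_cfgFlip (hxy : x ≠ y) (η : Config d) :
    spinJump y x x (cfgFlip x y η) = -spinJump x y x η := by
  simp only [spinJump, cfgFlip_cfgFlip hxy, neg_sub]

def gradPotential (Cp Cm : ℝ) : Fin 3 → ℝ := ![-Cm, 0, Cp]

lemma rate_mul_spinJump_add_rate_mul_spinJump (hxy : x ≠ y)
    (hgrad : Cp + Cm - CA - 2 * CE = 0) (η : Config d) :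
    rate Cp Cm CE CA CC x y η * spinJump x y x η +
        rate Cp Cm CE CA CC y x η * spinJump y x x η =
      gradPotential Cp Cm (η y) - gradPotential Cp Cm (η x) := by
  simp only [rate, spinJump, spin, cfgFlip_apply_left, cfgFlip_apply_right hxy.symm]
  generalize η x = a, η y = b
  fin_cases a <;> fin_cases b <;> simp [gradPotential] <;>
    first | linear_combination hgrad | linear_combination -hgrad

lemma nuInt_rate_mul_spinJump_mul_sub (hxy : x ≠ y)
    (hdb : CA * (wgt β ρ 2 * wgt β ρ 0) = CC * (wgt β ρ 1 * wgt β ρ 1))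
    (hgrad : Cp + Cm - CA - 2 * CE = 0) {h : Config d → ℝ} (hh : IsCylinder h) :
    nuInt β ρ (fun η =>
        rate Cp Cm CE CA CC x y η * spinJump x y x η * (h (cfgFlip x y η) - h η)) =
      nuInt β ρ (fun η => (gradPotential Cp Cm (η x) - gradPotential Cp Cm (η y)) * h η) := by
  have hK : IsCylinder fun η => -spinJump y x x η * h η :=
    (isCylinder_spinJump y x x).map₂ hh fun a b => -a * b
  have hJh : IsCylinder fun η => rate Cp Cm CE CA CC x y η * spinJump x y x η * h η :=
    ((isCylinder_rate x y).mul (isCylinder_spinJump x y x)).mul hh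
  calc _ = nuInt β ρ (fun η => rate Cp Cm CE CA CC x y η *
          (-spinJump y x x (cfgFlip x y η) * h (cfgFlip x y η)) -
          rate Cp Cm CE CA CC x y η * spinJump x y x η * h η) := by
        congr 1; funext η; rw [spinJump_cfgFlip hxy]; ring
    _ = nuInt β ρ (fun η => rate Cp Cm CE CA CC y x η * (-spinJump y x x η * h η)) -
          nuInt β ρ (fun η => rate Cp Cm CE CA CC x y η * spinJump x y x η * h η) := by
        rw [nuInt_sub ((isCylinder_rate x y).mul (hK.comp_cfgFlip x y)) hJh,
          nuInt_rate_mul_comp_cfgFlip hxy hdb hK]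
    _ = _ := by
        rw [← nuInt_sub ((isCylinder_rate y x).mul hK) hJh]
        congr 1; funext η
        linear_combination (-h η) * rate_mul_spinJump_add_rate_mul_spinJump hxy hgrad η

end Current

section DirichletForm

variable {d : ℕ} {β ρ Cp Cm CE CA CC : ℝ}

lemma zero_ne_ee (d : ℕ) (i : Fin d) : (0 : Site d) ≠ ee d i := fun h => by
  simpa [ee] using congrFun h i

lemma gradGammaSum_eq_sum {g : Config d → ℝ} {S : Finset (Site d)} (hg : DependsOn g ↑S)
    (i : Fin d) (η : Config d) :
    gradGammaSum i g η = ∑ x ∈ S ∪ S.image (· - ee d i),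
      (g (shiftCfg x (cfgFlip 0 (ee d i) η)) - g (shiftCfg x η)) := by
  refine tsum_eq_sum fun x hx => sub_eq_zero.2 (hg fun z hz => cfgFlip_apply_of_ne ?_ ?_ η)
  · exact fun h => hx (mem_union_left _ (by rwa [← sub_eq_zero.1 h]))
  · exact fun h => hx (mem_union_right _ (mem_image.2 ⟨z, hz, by rw [← h, sub_sub_cancel]⟩))

lemma isCylinder_gradGammaSum {g : Config d → ℝ} (hg : IsCylinder g) (i : Fin d) :
    IsCylinder (gradGammaSum i g) := by
  obtain ⟨S, hS⟩ := isCylinder_iff.1 hg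
  rw [funext (gradGammaSum_eq_sum hS i)]
  exact isCylinder_sum _ fun x _ =>
    ((hg.comp_shiftCfg x).comp_cfgFlip 0 (ee d i)).sub (hg.comp_shiftCfg x)

lemma nuInt_comp_eval_mul_comp_shiftCfg {g : Config d → ℝ} (hg : IsCylinder g)
    (F : Fin 3 → ℝ) (z x : Site d) :
    nuInt β ρ (fun η => F (η z) * g (shiftCfg x η)) =
      nuInt β ρ (fun η => F (η (z + x)) * g η) := by
  rw [← nuInt_comp_shiftCfg ((isCylinder_comp_eval (z + x) F).mul hg) x]
  simp [shiftCfg]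

lemma nuInt_rate_mul_spinJump_mul_gradGammaSum
    (hdb : CA * (wgt β ρ 2 * wgt β ρ 0) = CC * (wgt β ρ 1 * wgt β ρ 1))
    (hgrad : Cp + Cm - CA - 2 * CE = 0) {g : Config d → ℝ} (hg : IsCylinder g) (i : Fin d) :
    nuInt β ρ (fun η => rate Cp Cm CE CA CC 0 (ee d i) η * spinJump 0 (ee d i) 0 η *
      gradGammaSum i g η) = 0 := by
  obtain ⟨S, hS⟩ := isCylinder_iff.1 hg
  set e := ee d i
  set W : Site d → ℝ := fun z => nuInt β ρ (fun η => gradPotential Cp Cm (η z) * g η)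
  have hterm : ∀ x, nuInt β ρ (fun η => rate Cp Cm CE CA CC 0 e η * spinJump 0 e 0 η *
      (g (shiftCfg x (cfgFlip 0 e η)) - g (shiftCfg x η))) = W x - W (e + x) := fun x => by
    rw [nuInt_rate_mul_spinJump_mul_sub (zero_ne_ee d i) hdb hgrad (hg.comp_shiftCfg x)]
    simp_rw [sub_mul]
    rw [nuInt_sub ((isCylinder_comp_eval 0 _).mul (hg.comp_shiftCfg x))
        ((isCylinder_comp_eval e _).mul (hg.comp_shiftCfg x)),
      nuInt_comp_eval_mul_comp_shiftCfg hg, nuInt_comp_eval_mul_comp_shiftCfg hg, zero_add]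
  have hW : ∀ z ∉ S, W z = (∑ v, wgt β ρ v * gradPotential Cp Cm v) * nuInt β ρ g :=
    fun z hz => nuInt_mul_of_notMem hS hz _
  simp_rw [gradGammaSum_eq_sum hS i, mul_sum]
  rw [nuInt_sum _ fun x _ => ((isCylinder_rate 0 e).mul (isCylinder_spinJump 0 e 0)).mul
      (((hg.comp_shiftCfg x).comp_cfgFlip 0 e).sub (hg.comp_shiftCfg x)),
    sum_congr rfl fun x _ => hterm x]
  exact sum_sub_translate_eq_zero e hW subset_union_left fun z hz =>
    mem_image.2 ⟨z - e, mem_union_right _ (mem_image_of_mem _ hz), add_sub_cancel e z⟩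

lemma dirichletForm_eq_nuInt (i : Fin d) (a : ℝ) (g : Config d → ℝ) :
    dirichletForm Cp Cm CE CA CC ρ i a g = nuInt (CC / CA) ρ (fun η =>
      rate Cp Cm CE CA CC 0 (ee d i) η *
        (a * spinJump 0 (ee d i) 0 η + gradGammaSum i g η) ^ 2) :=
  rfl

lemma gradGammaSum_zero (i : Fin d) : gradGammaSum i (fun _ => 0) = fun _ => 0 :=
  funext fun _ => by simp [gradGammaSum]

lemma dirichletForm_eq_add {g : Config d → ℝ} (hg : IsCylinder g) (i : Fin d) (a : ℝ) :
    dirichletForm Cp Cm CE CA CC ρ i a g = dirichletForm Cp Cm CE CA CC ρ i a (fun _ => 0) +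
      2 * a * nuInt (CC / CA) ρ (fun η => rate Cp Cm CE CA CC 0 (ee d i) η *
        spinJump 0 (ee d i) 0 η * gradGammaSum i g η) +
      nuInt (CC / CA) ρ (fun η =>
        rate Cp Cm CE CA CC 0 (ee d i) η * gradGammaSum i g η ^ 2) := by
  have hc := isCylinder_rate (Cp := Cp) (Cm := Cm) (CE := CE) (CA := CA) (CC := CC) 0 (ee d i)
  have hJ := isCylinder_spinJump 0 (ee d i) 0
  have hΓ := isCylinder_gradGammaSum hg i
  simp only [dirichletForm_eq_nuInt, gradGammaSum_zero, add_zero]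
  have hsq := hc.map₂ hJ fun r j => r * (a * j) ^ 2
  have hcross := (isCylinder_const (2 * a)).mul ((hc.mul hJ).mul hΓ)
  have hquad := hc.map₂ hΓ fun r γ => r * γ ^ 2
  rw [← nuInt_const_mul _ ((hc.mul hJ).mul hΓ), ← nuInt_add hsq hcross,
    ← nuInt_add (hsq.add hcross) hquad]
  congr 1
  funext η
  ring

lemma dirichletForm_zero_le (hw : ∀ v, 0 ≤ wgt (CC / CA) ρ v)
    (hdb : CA * (wgt (CC / CA) ρ 2 * wgt (CC / CA) ρ 0) =
      CC * (wgt (CC / CA) ρ 1 * wgt (CC / CA) ρ 1))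
    (hgrad : Cp + Cm - CA - 2 * CE = 0)
    (hCp : 0 ≤ Cp) (hCm : 0 ≤ Cm) (hCE : 0 ≤ CE) (hCA : 0 ≤ CA) (hCC : 0 ≤ CC)
    {g : Config d → ℝ} (hg : IsCylinder g) (i : Fin d) (a : ℝ) :
    dirichletForm Cp Cm CE CA CC ρ i a (fun _ => 0) ≤ dirichletForm Cp Cm CE CA CC ρ i a g := by
  rw [dirichletForm_eq_add hg, nuInt_rate_mul_spinJump_mul_gradGammaSum hdb hgrad hg, mul_zero,
    add_zero]
  exact le_add_of_nonneg_right (nuInt_nonneg hw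
    ((isCylinder_rate 0 (ee d i)).map₂ (isCylinder_gradGammaSum hg i) fun r γ => r * γ ^ 2)
    fun η => mul_nonneg (rate_nonneg hCp hCm hCE hCA hCC _ _ η) (sq_nonneg _))

lemma rate_mul_spinJump_sq (x y : Site d) (η : Config d) :
    rate Cp Cm CE CA CC x y η * spinJump x y x η ^ 2 =
      ![![0, 0, 4 * CE], ![Cm, CC, 0], ![CA, Cp, 0]] (η x) (η y) := by
  simp only [rate, spinJump, spin, cfgFlip_apply_left]
  generalize η x = a, η y = b
  fin_cases a <;> fin_cases b <;> norm_num [Fin.ext_iff, mul_comm]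

lemma dirichletForm_zero (i : Fin d) (a : ℝ) :
    dirichletForm Cp Cm CE CA CC ρ i a (fun _ => 0) = a ^ 2 *
      (Cp * (wgt (CC / CA) ρ 2 * wgt (CC / CA) ρ 1) +
        Cm * (wgt (CC / CA) ρ 1 * wgt (CC / CA) ρ 0) +
        (4 * CE + CA) * (wgt (CC / CA) ρ 2 * wgt (CC / CA) ρ 0) +
        CC * (wgt (CC / CA) ρ 1 * wgt (CC / CA) ρ 1)) := by
  have h : ∀ η : Config d, rate Cp Cm CE CA CC 0 (ee d i) η *
      (a * spinJump 0 (ee d i) 0 η + gradGammaSum i (fun _ => 0) η) ^ 2 =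
      a ^ 2 * ![![0, 0, 4 * CE], ![Cm, CC, 0], ![CA, Cp, 0]] (η 0) (η (ee d i)) := fun η => by
    rw [gradGammaSum_zero, ← rate_mul_spinJump_sq]
    ring
  rw [dirichletForm_eq_nuInt, funext h, nuInt_comp_eval₂ (zero_ne_ee d i)
    fun u v => a ^ 2 * ![![0, 0, 4 * CE], ![Cm, CC, 0], ![CA, Cp, 0]] u v]
  simp [Fin.sum_univ_three]
  ring

lemma dirichletForm_zero_of_gradient (hCA : 0 < CA) (hCC : 0 < CC)
    (hgrad : Cp + Cm - CA - 2 * CE = 0) (hρ : |ρ| < 1) (i : Fin d) :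
    dirichletForm Cp Cm CE CA CC ρ i 1 (fun _ => 0) =
      Phi (CC / CA) ρ * (ρ * (Cp - Cm) + phiRoot (CC / CA) ρ * (Cp + Cm)) / 2 := by
  have hβ : CA * (CC / CA) = CC := mul_div_cancel₀ _ hCA.ne'
  rw [dirichletForm_zero, wgt_zero, wgt_one, wgt_two, phiRoot_eq]
  linear_combination ((4 * CE + CA) / 4) * one_sub_Phi_sq_sub_sq (div_pos hCC hCA) hρ
    - 2 * (CC / CA) * Phi (CC / CA) ρ ^ 2 * hgrad - Phi (CC / CA) ρ ^ 2 * hβ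

end DirichletForm

/-- Remark after Theorem 3.17: under the gradient condition
`C_+ + C_- - C_A - 2C_E = 0`, the diffusion coefficient is explicitly
`d(ρ) = -(Φ'(ρ)/2)(C_+ - C_-) + (C_+ + C_-)/2`. -/
theorem diffusion_coefficient_gradient_case
    (d : ℕ) (hd : 0 < d)
    (Cp Cm CE CA CC : ℝ)
    (hCp : 0 < Cp) (hCm : 0 < Cm) (hCE : 0 ≤ CE) (hCA : 0 < CA) (hCC : 0 < CC)
    (hgrad : Cp + Cm - CA - 2 * CE = 0) :
    ∀ ρ ∈ Set.Ioo (-1 : ℝ) 1,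
      dCoef d hd Cp Cm CE CA CC ρ =
        -(deriv (Phi (CC / CA)) ρ / 2) * (Cp - Cm) + (Cp + Cm) / 2 := by
  rintro ρ ⟨hρ₁, hρ₂⟩
  have hρ : |ρ| < 1 := abs_lt.2 ⟨hρ₁, hρ₂⟩
  have hβ : 0 < CC / CA := div_pos hCC hCA
  have hdb : CA * (wgt (CC / CA) ρ 2 * wgt (CC / CA) ρ 0) =
      CC * (wgt (CC / CA) ρ 1 * wgt (CC / CA) ρ 1) := by
    rw [wgt_two_mul_wgt_zero hβ hρ, ← mul_assoc, mul_div_cancel₀ _ hCA.ne']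
  have hmin : IsLeast {v | ∃ g : Config d → ℝ, IsCylinder g ∧
      v = dirichletForm Cp Cm CE CA CC ρ ⟨0, hd⟩ 1 g}
      (dirichletForm Cp Cm CE CA CC ρ ⟨0, hd⟩ 1 fun _ => 0) := by
    refine ⟨⟨_, isCylinder_const 0, rfl⟩, ?_⟩
    rintro _ ⟨g, hg, rfl⟩
    exact dirichletForm_zero_le (fun v => (wgt_pos hβ hρ v).le) hdb hgrad hCp.le hCm.le hCE
      hCA.le hCC.le hg _ _
  rw [dCoef, hmin.csInf_eq, dirichletForm_zero_of_gradient hCA hCC hgrad hρ,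
    (hasDerivAt_Phi hβ hρ).deriv, compress_eq hβ hρ]
  field_simp [(Phi_pos hβ hρ).ne', (phiRoot_pos hβ hρ).ne']
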